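/- Let f : {0,1}^n → {0,1} be a Boolean function and let 𝕊 be the family of all subsets T ⊆ {1,…,n} such that T is a local sufficient reason for (f,x) for some x ∈ {0,1}^n. Then a subset S ⊆ {1,…,n} is a hitting set for 𝕊 of minimum cardinality among all hitting sets for 𝕊 if and only if S is a global contrastive reason for f of minimum cardinality among all global contrastive reasons for f. -/

import Mathlib

/-- `comb S x z` is the input that equals `x` on coordinates in `S` and `z` outside `S`. -/
def comb {n : ℕ} (S : Finset (Fin n)) (x z : Fin n → Bool) : Fin n → Bool :=
  fun i => if i ∈ S then x i else z i

/-- `S` is a local sufficient reason for `(f, x)`. -/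
def LocalSuff {n : ℕ} (f : (Fin n → Bool) → Bool) (x : Fin n → Bool)
    (S : Finset (Fin n)) : Prop :=
  ∀ z : Fin n → Bool, f (comb S x z) = f x

/-- `S` is a global contrastive reason for `f`. -/
def GlobalContrastive {n : ℕ} (f : (Fin n → Bool) → Bool) (S : Finset (Fin n)) : Prop :=
  ∀ x : Fin n → Bool, ∃ z : Fin n → Bool, f (comb S z x) ≠ f x

/-! A set `S` meets every local sufficient reason exactly when its complement is not a local
sufficient reason at any input, because local sufficiency is upward closed; and `Sᶜ` fails to be
sufficient at `x` exactly when some change of the `S`-coordinates of `x` flips `f`, i.e. when `S` is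
a global contrastive reason. So the two families of sets coincide, and hence so do their members
of minimum cardinality. -/

section

variable {n : ℕ}

theorem comb_compl (S : Finset (Fin n)) (x z : Fin n → Bool) : comb Sᶜ x z = comb S z x := by
  funext i
  by_cases hi : i ∈ S <;> simp [comb, hi]

theorem comb_comb_of_subset {T U : Finset (Fin n)} (hTU : T ⊆ U) (x z : Fin n → Bool) :
    comb T x (comb U x z) = comb U x z := by
  funext i
  by_cases hi : i ∈ T
  · simp [comb, hi, hTU hi]
  · simp [comb, hi]

theorem LocalSuff.mono {f : (Fin n → Bool) → Bool} {x : Fin n → Bool} {T U : Finset (Fin n)}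
    (hT : LocalSuff f x T) (hTU : T ⊆ U) : LocalSuff f x U := fun z => by
  rw [← comb_comb_of_subset hTU x z]
  exact hT _

theorem globalContrastive_iff_forall_not_localSuff_compl (f : (Fin n → Bool) → Bool)
    (S : Finset (Fin n)) : GlobalContrastive f S ↔ ∀ x, ¬ LocalSuff f x Sᶜ := by
  simp only [GlobalContrastive, LocalSuff, comb_compl, not_forall]

theorem hits_localSuff_iff_globalContrastive (f : (Fin n → Bool) → Bool) (S : Finset (Fin n)) :
    (∀ T : Finset (Fin n), (∃ x, LocalSuff f x T) → (S ∩ T).Nonempty) ↔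
      GlobalContrastive f S := by
  rw [globalContrastive_iff_forall_not_localSuff_compl]
  constructor
  · intro hS x hx
    simpa using hS Sᶜ ⟨x, hx⟩
  · rintro hS T ⟨x, hT⟩
    by_contra hST
    have hTS : T ⊆ Sᶜ := by
      rwa [Finset.subset_compl_iff_disjoint_left, Finset.disjoint_iff_inter_eq_empty,
        ← Finset.not_nonempty_iff_eq_empty]
    exact hS x (hT.mono hTS)

end

theorem mhs_of_sufficients_iff_min_global_contrastive {n : ℕ}
    (f : (Fin n → Bool) → Bool) (S : Finset (Fin n)) :
    ((∀ T : Finset (Fin n), (∃ x : Fin n → Bool, LocalSuff f x T) →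
        (S ∩ T).Nonempty) ∧
      ∀ H : Finset (Fin n),
        (∀ T : Finset (Fin n), (∃ x : Fin n → Bool, LocalSuff f x T) →
          (H ∩ T).Nonempty) → S.card ≤ H.card) ↔
    (GlobalContrastive f S ∧
      ∀ T : Finset (Fin n), GlobalContrastive f T → S.card ≤ T.card) := by
  simp only [hits_localSuff_iff_globalContrastive]
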